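/- arXiv:2006.08580 — 3 statements merged into one kernel-verified Lean document; each statement's English description precedes it below -/
import Mathlib

section
/- Let B ∈ ℝ^{dr×dr} be the block-diagonal matrix whose l-th d×d diagonal block equals (1/2)‖u_l⋆‖₂⁴ I_d + ‖u_l⋆‖₂² u_l⋆ (u_l⋆)ᵀ, for 1 ≤ l ≤ r. If U⋆ is μ-incoherent, then there is a universal constant C > 0 such that, in the Loewner order, Σ_{1≤i≤j≤k≤d} h_{i,j,k} h_{i,j,k}ᵀ ⪯ B + C·(r·√(μ/d) + μr/d)·(max_{1≤l≤r} ‖u_l⋆‖₂⁴)·I_{dr}. -/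
noncomputable section

open MeasureTheory ProbabilityTheory Matrix

namespace TC

/-- Index triples for a `d × d × d` tensor. -/
abbrev Idx (d : ℕ) := Fin d × Fin d × Fin d

/-- Sort a triple of indices into nondecreasing order `(min, median, max)`. -/
def sort3 {d : ℕ} (t : Idx d) : Idx d :=
  (min t.1 (min t.2.1 t.2.2),
    max (min t.1 t.2.1) (min (max t.1 t.2.1) t.2.2),
    max t.1 (max t.2.1 t.2.2))

/-- A symmetric tensor determined by its values on sorted triples. -/
def symEntry {d : ℕ} {α : Type*} (e : Idx d → α) (t : Idx d) : α := e (sort3 t)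

/-- The CP tensor `∑_l u_l ⊗ u_l ⊗ u_l` built from the factor matrix `W`
(the `l`-th column of `W` is the factor `u_l`). -/
def cpTensor {d r : ℕ} (W : Matrix (Fin d) (Fin r) ℝ) (t : Idx d) : ℝ :=
  ∑ l : Fin r, W t.1 l * W t.2.1 l * W t.2.2 l

/-- Euclidean norm of a vector. -/
def norm2 {n : Type*} [Fintype n] (u : n → ℝ) : ℝ := Real.sqrt (∑ i, u i ^ 2)

/-- Sup-norm of a vector. -/
def normInf {n : Type*} [Fintype n] (u : n → ℝ) : ℝ := ⨆ i, |u i|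

/-- The `l`-th column of a factor matrix, i.e. the factor `u_l`. -/
def colU {d r : ℕ} (U : Matrix (Fin d) (Fin r) ℝ) (l : Fin r) : Fin d → ℝ := fun i => U i l

/-- `λ⋆_max = max_l ‖u_l⋆‖₂³`. -/
def lamMax {d r : ℕ} (U : Matrix (Fin d) (Fin r) ℝ) : ℝ := ⨆ l : Fin r, norm2 (colU U l) ^ 3

/-- `λ⋆_min = min_l ‖u_l⋆‖₂³`. -/
def lamMin {d r : ℕ} (U : Matrix (Fin d) (Fin r) ℝ) : ℝ := ⨅ l : Fin r, norm2 (colU U l) ^ 3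

/-- `μ`-incoherence of the factor matrix `U`. -/
def Incoherent {d r : ℕ} (μ : ℝ) (U : Matrix (Fin d) (Fin r) ℝ) : Prop :=
  (⨆ t : Idx d, |cpTensor U t|) ≤
      Real.sqrt (μ / (d : ℝ) ^ 3) * Real.sqrt (∑ t : Idx d, cpTensor U t ^ 2) ∧
  (∀ l, normInf (colU U l) ≤ Real.sqrt (μ / (d : ℝ)) * norm2 (colU U l)) ∧
  ∀ l j, l ≠ j →
    |∑ i, U i l * U i j| ≤ Real.sqrt (μ / (d : ℝ)) * (norm2 (colU U l) * norm2 (colU U j))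

/-- The lifted `d² × r` matrix `Ũ`, with `((i,j), l)` entry `u_{l,i} u_{l,j}`. -/
def lift {d r : ℕ} (U : Matrix (Fin d) (Fin r) ℝ) : Matrix (Fin d × Fin d) (Fin r) ℝ :=
  Matrix.of fun ij l => U ij.1 l * U ij.2 l

/-- `Ũᵀ Ũ`. -/
def gram {d r : ℕ} (U : Matrix (Fin d) (Fin r) ℝ) : Matrix (Fin r) (Fin r) ℝ :=
  (lift U)ᵀ * lift U

/-- The diagonal matrix `D_k⋆` of noise variances in the `k`-th slice. -/
def Dstar {d : ℕ} (σv : Fin d → Fin d → Fin d → ℝ) (k : Fin d) :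
    Matrix (Fin d × Fin d) (Fin d × Fin d) ℝ :=
  Matrix.diagonal fun ij => σv ij.1 ij.2 k ^ 2

/-- The covariance matrix `Σ_k⋆ = (2/p) (ŨᵀŨ)⁻¹ Ũᵀ D_k⋆ Ũ (ŨᵀŨ)⁻¹`. -/
def SigmaStar {d r : ℕ} (U : Matrix (Fin d) (Fin r) ℝ) (p : ℝ)
    (σv : Fin d → Fin d → Fin d → ℝ) (k : Fin d) : Matrix (Fin r) (Fin r) ℝ :=
  (2 / p) • ((gram U)⁻¹ * (lift U)ᵀ * Dstar σv k * lift U * (gram U)⁻¹)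

/-- Quadratic form `Ũ_{(i,j),:} Σ_m⋆ (Ũ_{(i,j),:})ᵀ`. -/
def qf {d r : ℕ} (U : Matrix (Fin d) (Fin r) ℝ) (p : ℝ)
    (σv : Fin d → Fin d → Fin d → ℝ) (m i j : Fin d) : ℝ :=
  ∑ a : Fin r, ∑ b : Fin r, lift U (i, j) a * SigmaStar U p σv m a b * lift U (i, j) b

/-- The variance parameters `v⋆_{i,j,k}` (symmetric in the indices). -/
def vstar {d r : ℕ} (U : Matrix (Fin d) (Fin r) ℝ) (p : ℝ)
    (σv : Fin d → Fin d → Fin d → ℝ) (i j k : Fin d) : ℝ :=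
  if i = j ∧ j = k then 9 * qf U p σv i i i
  else if i = j then 4 * qf U p σv i i k + qf U p σv k i i
  else if i = k then 4 * qf U p σv i i j + qf U p σv j i i
  else if j = k then 4 * qf U p σv j j i + qf U p σv i j j
  else qf U p σv i j k + qf U p σv j i k + qf U p σv k i j

/-- Bernoulli measure on `Bool` with success probability `p` (clipped at 1). -/
def bern (p : ℝ) : Measure Bool :=
  (PMF.bernoulli (min (Real.toNNReal p) 1) (min_le_right _ _)).toMeasure

/-- The random symmetric sampling pattern: independent Bernoulli(p) indicators for the
sorted triples, symmetrized through `symEntry`/`sort3`. -/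
def sampleMeasure (d : ℕ) (p : ℝ) : Measure (Idx d → Bool) :=
  Measure.pi fun _ => bern p

/-- i.i.d. Gaussian noise with variance `v` on the sorted triples, symmetrized through
`symEntry`/`sort3`. -/
def noiseMeasure (d : ℕ) (v : NNReal) : Measure (Idx d → ℝ) :=
  Measure.pi fun _ => gaussianReal 0 v

/-- The indicator `χ_{i,j,k}` of the (symmetrized) sampling set. -/
def chi {d : ℕ} (S : Idx d → Bool) (t : Idx d) : ℝ := if symEntry S t then 1 else 0

/-- The observed (masked) tensor `𝒫_Ω(W♯ + E)` for ground truth `W` and noise `e`. -/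
def obs {d r : ℕ} (S : Idx d → Bool) (W : Matrix (Fin d) (Fin r) ℝ) (e : Idx d → ℝ) :
    Idx d → ℝ :=
  fun t => if symEntry S t then cpTensor W t + symEntry e t else 0

/-- The sorted triples `i ≤ j ≤ k`. -/
def sortedTriples (d : ℕ) : Finset (Idx d) :=
  Finset.univ.filter fun t => t.1 ≤ t.2.1 ∧ t.2.1 ≤ t.2.2

/-- The vector `h_{i,j,k} ∈ ℝ^{dr}` with `(l, s)` entry
`u⋆_{l,j}u⋆_{l,k}·1{i=s} + u⋆_{l,i}u⋆_{l,k}·1{j=s} + u⋆_{l,i}u⋆_{l,j}·1{k=s}`. -/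
def hvec {d r : ℕ} (U : Matrix (Fin d) (Fin r) ℝ) (t : Idx d) : Fin r × Fin d → ℝ :=
  fun ls =>
    (if t.1 = ls.2 then U t.2.1 ls.1 * U t.2.2 ls.1 else 0) +
      (if t.2.1 = ls.2 then U t.1 ls.1 * U t.2.2 ls.1 else 0) +
      (if t.2.2 = ls.2 then U t.1 ls.1 * U t.2.1 ls.1 else 0)

/-- Spectral norm of a square matrix: `sup_{‖x‖₂ ≤ 1} ‖A x‖₂`. -/
def specNorm {n : Type*} [Fintype n] (A : Matrix n n ℝ) : ℝ :=
  ⨆ x : { x : n → ℝ // ∑ i, x i ^ 2 ≤ 1 }, Real.sqrt (∑ i, A.mulVec x.1 i ^ 2)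

/-- `V⋆ = Ũ (ŨᵀŨ)⁻¹`. -/
def Vmat {d r : ℕ} (U : Matrix (Fin d) (Fin r) ℝ) : Matrix (Fin d × Fin d) (Fin r) ℝ :=
  lift U * (gram U)⁻¹

/-- `P⋆ = Ũ (ŨᵀŨ)⁻¹ Ũᵀ`. -/
def Pmat {d r : ℕ} (U : Matrix (Fin d) (Fin r) ℝ) :
    Matrix (Fin d × Fin d) (Fin d × Fin d) ℝ :=
  lift U * (gram U)⁻¹ * (lift U)ᵀ

/-- The random matrix `S_m⋆` built from the sampling pattern `S`. -/
def SstarMat {d r : ℕ} (U : Matrix (Fin d) (Fin r) ℝ) (p : ℝ)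
    (σv : Fin d → Fin d → Fin d → ℝ) (S : Idx d → Bool) (m : Fin d) :
    Matrix (Fin r) (Fin r) ℝ :=
  Matrix.of fun a b =>
    2 / p ^ 2 * ∑ i : Fin d, ∑ j : Fin d,
      σv i j m ^ 2 * chi S (i, j, m) * (∑ l, (gram U)⁻¹ a l * lift U (i, j) l) *
        (∑ l, (gram U)⁻¹ b l * lift U (i, j) l)

/-- The row vector `z_{i,j,k} = p⁻¹ E_{i,j,k} χ_{i,j,k} Ũ_{(i,j),:} (ŨᵀŨ)⁻¹`, as a function of a
joint sampling/noise outcome `ω`. -/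
def zEntry {d r : ℕ} (U : Matrix (Fin d) (Fin r) ℝ) (p : ℝ)
    (ω : (Idx d → Bool) × (Idx d → ℝ)) (i j k : Fin d) : Fin r → ℝ :=
  fun l => p⁻¹ * symEntry ω.2 (i, j, k) * chi ω.1 (i, j, k) *
    ∑ a, lift U (i, j) a * (gram U)⁻¹ a l

/-- The random matrix `X` with rows `X_{m,:} = ∑_{i,j} z_{i,j,m}`. -/
def Xmat {d r : ℕ} (U : Matrix (Fin d) (Fin r) ℝ) (p : ℝ)
    (ω : (Idx d → Bool) × (Idx d → ℝ)) : Fin d → Fin r → ℝ :=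
  fun m l => ∑ i : Fin d, ∑ j : Fin d, zEntry U p ω i j m l

/-- The random matrix `Z` with rows `Z_{k,:} = √2 ∑_i z_{i,i,k} + 2 ∑_{i<j} z_{i,j,k}`. -/
def Zmat {d r : ℕ} (U : Matrix (Fin d) (Fin r) ℝ) (p : ℝ)
    (ω : (Idx d → Bool) × (Idx d → ℝ)) : Fin d → Fin r → ℝ :=
  fun k l =>
    Real.sqrt 2 * ∑ i : Fin d, zEntry U p ω i i k l +
      2 * ∑ i : Fin d, ∑ j : Fin d, if i < j then zEntry U p ω i j k l else 0

/-- Standard normal CDF `Φ`. -/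
def stdGaussCDF (τ : ℝ) : ℝ := (gaussianReal 0 1 (Set.Iic τ)).toReal

/-- Update the `(s, l)` entry of a matrix to the value `x`. -/
def updEntry {d r : ℕ} (U : Matrix (Fin d) (Fin r) ℝ) (s : Fin d) (l : Fin r) (x : ℝ) :
    Matrix (Fin d) (Fin r) ℝ :=
  Matrix.of fun i l' => if i = s ∧ l' = l then x else U i l'

/-- The score vector `g = σ⁻² ∑_{i≤j≤k} χ_{ijk} E_{ijk} h_{ijk}`. -/
def gvec {d r : ℕ} (U : Matrix (Fin d) (Fin r) ℝ) (σ : ℝ) (S : Finset (Idx d))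
    (e : Idx d → ℝ) : Fin r × Fin d → ℝ :=
  fun ls => (σ ^ 2)⁻¹ *
    ∑ t ∈ sortedTriples d, (if t ∈ S then (1 : ℝ) else 0) * symEntry e t * hvec U t ls

/-- The covariance matrix `S_l⋆` of the `l`-th column of the Gaussian part of the error,
for product-form noise levels `σ_{ijk} = s_i s_j s_k`. -/
def SlMat {d r : ℕ} (U : Matrix (Fin d) (Fin r) ℝ) (p : ℝ) (s : Fin d → ℝ) (l : Fin r) :
    Matrix (Fin d) (Fin d) ℝ :=
  Matrix.of fun i j =>
    if i = j then
      2 * ∑ k₁ : Fin d, ∑ k₂ : Fin d, p⁻¹ * (s i * s k₁ * s k₂) ^ 2 * Vmat U (k₁, k₂) l ^ 2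
    else
      4 * (∑ k : Fin d, p⁻¹ * (s i * s j * s k) ^ 2 * Vmat U (i, k) l * Vmat U (j, k) l) -
        (4 - 2 * Real.sqrt 2) * p⁻¹ * (s i * s i * s j) ^ 2 * Vmat U (i, i) l * Vmat U (i, j) l -
        (4 - 2 * Real.sqrt 2) * p⁻¹ * (s i * s j * s j) ^ 2 * Vmat U (j, j) l * Vmat U (i, j) l

/-- Spectral norm of an order-3 tensor: `sup_{‖x‖=‖y‖=‖z‖=1} ⟨T, x⊗y⊗z⟩`. -/
def tSpec {d : ℕ} (T : Idx d → ℝ) : ℝ :=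
  ⨆ v : { v : (Fin d → ℝ) × (Fin d → ℝ) × (Fin d → ℝ) //
      norm2 v.1 = 1 ∧ norm2 v.2.1 = 1 ∧ norm2 v.2.2 = 1 },
    ∑ t : Idx d, T t * v.1.1 t.1 * v.1.2.1 t.2.1 * v.1.2.2 t.2.2


/-!
For `x ∈ ℝ^{r×d}`, `⟨h_{i,j,k}, x⟩` is the `(i,j,k)` entry of the symmetric tensor
`D = ∑ₗ (xₗ ⊗ uₗ ⊗ uₗ + uₗ ⊗ xₗ ⊗ uₗ + uₗ ⊗ uₗ ⊗ xₗ)`, so the quadratic form of `∑ h hᵀ` is the sum of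
`D_{ijk}²` over sorted triples. By symmetry of `D` this is at most `1/6` of the sum over all triples
plus twice the sum over the diagonal `i = j`. The full sum expands as
`∑_{l,m} (3⟨uₗ,uₘ⟩²⟨xₗ,xₘ⟩ + 6⟨uₗ,uₘ⟩⟨uₗ,xₘ⟩⟨xₗ,uₘ⟩)`, whose terms `l = m` give six times the
quadratic form of `B`. The terms `l ≠ m` are small because the `uₗ` are nearly orthogonal, and the
diagonal sum because each `uₗ` is spread out (`‖uₗ‖_∞ ≤ √(μ/d) ‖uₗ‖₂`); both are
`O((r√(μ/d) + μr/d) maxₗ ‖uₗ‖⁴ ‖x‖²)`.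
-/
section TripleSums

variable {α : Type*}

def rotate3 : Equiv.Perm (α × α × α) where
  toFun t := (t.2.1, t.2.2, t.1)
  invFun t := (t.2.2, t.1, t.2.1)
  left_inv _ := rfl
  right_inv _ := rfl

def swap12 : Equiv.Perm (α × α × α) where
  toFun t := (t.2.1, t.1, t.2.2)
  invFun t := (t.2.1, t.1, t.2.2)
  left_inv _ := rfl
  right_inv _ := rfl

@[simp] lemma rotate3_apply (t : α × α × α) : rotate3 t = (t.2.1, t.2.2, t.1) := rfl

@[simp] lemma swap12_apply (t : α × α × α) : swap12 t = (t.2.1, t.1, t.2.2) := rfl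

variable {d : ℕ}

lemma sum_sortedTriples_eq_sum_ite (F : Idx d → ℝ) :
    ∑ t ∈ sortedTriples d, F t = ∑ t, if t.1 ≤ t.2.1 ∧ t.2.1 ≤ t.2.2 then F t else 0 :=
  Finset.sum_filter _ _

lemma sum_ite_fst_eq_snd (F : Idx d → ℝ) :
    ∑ t : Idx d, (if t.1 = t.2.1 then F t else 0) = ∑ a, ∑ b, F (a, a, b) := by
  simp only [Fintype.sum_prod_type]
  refine Finset.sum_congr rfl fun a _ => ?_
  rw [Finset.sum_comm]
  simp

/-- Each strictly increasing triple has six rearrangements, each weighted by `1/6`; triples with a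
repeated index are counted through the two diagonals `i = j` and `j = k`. -/
lemma sum_sortedTriples_le (F : Idx d → ℝ) (hF : ∀ t, 0 ≤ F t)
    (hrot : ∀ t, F (rotate3 t) = F t) (hswap : ∀ t, F (swap12 t) = F t) :
    ∑ t ∈ sortedTriples d, F t ≤ (1 / 6) * ∑ t, F t + 2 * ∑ a, ∑ b, F (a, a, b) := by
  set g : Idx d → ℝ := fun t => if t.1 < t.2.1 ∧ t.2.1 < t.2.2 then F t else 0
  have six : 6 * ∑ t, g t ≤ ∑ t, F t := by
    calc 6 * ∑ t, g t
        = ∑ t, (g t + g (swap12 t) + g (rotate3 t) + g (rotate3 (rotate3 t)) +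
            g (swap12 (rotate3 t)) + g (swap12 (rotate3 (rotate3 t)))) := by
          simp only [Finset.sum_add_distrib, Equiv.sum_comp rotate3 (fun t => g (rotate3 t)),
            Equiv.sum_comp rotate3 (fun t => g (swap12 (rotate3 t))),
            Equiv.sum_comp rotate3 (fun t => g (swap12 t)), Equiv.sum_comp rotate3,
            Equiv.sum_comp swap12]
          ring
      _ ≤ ∑ t, F t := by
          refine Finset.sum_le_sum fun t _ => ?_
          have h1 := hrot t
          have h2 := hrot (rotate3 t)
          have h3 := hswap t
          have h4 := hswap (rotate3 t)
          have h5 := hswap (rotate3 (rotate3 t))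
          have := hF t
          simp only [g, rotate3_apply, swap12_apply, Fin.lt_def] at h1 h2 h3 h4 h5 ⊢
          split_ifs <;> first | omega | linarith
  have diag : ∑ t : Idx d, (if t.2.1 = t.2.2 then F t else 0) = ∑ a, ∑ b, F (a, a, b) := by
    calc ∑ t : Idx d, (if t.2.1 = t.2.2 then F t else 0)
        = ∑ t, (if (rotate3 t).1 = (rotate3 t).2.1 then F (rotate3 t) else 0) := by
          simp only [hrot]; rfl
      _ = ∑ a, ∑ b, F (a, a, b) :=
          (Equiv.sum_comp rotate3 fun t => if t.1 = t.2.1 then F t else 0).trans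
            (sum_ite_fst_eq_snd F)
  have split : ∀ t : Idx d, (if t.1 ≤ t.2.1 ∧ t.2.1 ≤ t.2.2 then F t else 0) ≤
      g t + ((if t.1 = t.2.1 then F t else 0) + if t.2.1 = t.2.2 then F t else 0) := by
    intro t
    have := hF t
    simp only [g, Fin.lt_def, Fin.le_def, Fin.ext_iff]
    split_ifs <;> first | omega | linarith
  calc ∑ t ∈ sortedTriples d, F t
      ≤ ∑ t, (g t + ((if t.1 = t.2.1 then F t else 0) + if t.2.1 = t.2.2 then F t else 0)) := by
        rw [sum_sortedTriples_eq_sum_ite]; exact Finset.sum_le_sum fun t _ => split t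
    _ ≤ (1 / 6) * ∑ t, F t + 2 * ∑ a, ∑ b, F (a, a, b) := by
        rw [Finset.sum_add_distrib, Finset.sum_add_distrib, sum_ite_fst_eq_snd, diag]
        linarith

end TripleSums

section CPDerivative

variable {κ ι : Type*} [Fintype κ]

/-- The derivative of `u ↦ ∑ₗ uₗ ⊗ uₗ ⊗ uₗ` at `u` in the direction `x`; its `(i, j, k)` entry is
`⟨h_{i,j,k}, x⟩`. -/
def cpDeriv (u x : κ → ι → ℝ) (t : ι × ι × ι) : ℝ :=
  ∑ l, (x l t.1 * u l t.2.1 * u l t.2.2 + u l t.1 * x l t.2.1 * u l t.2.2 +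
    u l t.1 * u l t.2.1 * x l t.2.2)

lemma cpDeriv_rotate3 (u x : κ → ι → ℝ) (t : ι × ι × ι) :
    cpDeriv u x (rotate3 t) = cpDeriv u x t :=
  Finset.sum_congr rfl fun _ _ => by simp only [rotate3_apply]; ring

lemma cpDeriv_swap12 (u x : κ → ι → ℝ) (t : ι × ι × ι) :
    cpDeriv u x (swap12 t) = cpDeriv u x t :=
  Finset.sum_congr rfl fun _ _ => by simp only [swap12_apply]; ring

variable [Fintype ι]

lemma sum_mul_mul_mul (f g h f' g' h' : ι → ℝ) :
    ∑ i, ∑ j, ∑ k, f i * g j * h k * (f' i * g' j * h' k) =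
      (∑ i, f i * f' i) * (∑ j, g j * g' j) * ∑ k, h k * h' k := by
  rw [Finset.sum_mul_sum, Finset.sum_mul]
  refine Finset.sum_congr rfl fun i _ => ?_
  rw [Finset.sum_mul]
  refine Finset.sum_congr rfl fun j _ => ?_
  rw [Finset.mul_sum]
  exact Finset.sum_congr rfl fun k _ => by ring

theorem sum_cpDeriv_sq (u x : κ → ι → ℝ) :
    ∑ t, cpDeriv u x t ^ 2 =
      ∑ l, ∑ m, (3 * (∑ i, u l i * u m i) ^ 2 * (∑ i, x l i * x m i) +
        6 * (∑ i, u l i * u m i) * (∑ i, u l i * x m i) * ∑ i, x l i * u m i) := by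
  calc ∑ t, cpDeriv u x t ^ 2
      = ∑ t : ι × ι × ι, ∑ l, ∑ m,
          (x l t.1 * u l t.2.1 * u l t.2.2 + u l t.1 * x l t.2.1 * u l t.2.2 +
            u l t.1 * u l t.2.1 * x l t.2.2) *
          (x m t.1 * u m t.2.1 * u m t.2.2 + u m t.1 * x m t.2.1 * u m t.2.2 +
            u m t.1 * u m t.2.1 * x m t.2.2) := by
        simp only [cpDeriv, sq, Finset.sum_mul_sum]
    _ = ∑ l, ∑ m, ∑ t : ι × ι × ι,
          (x l t.1 * u l t.2.1 * u l t.2.2 + u l t.1 * x l t.2.1 * u l t.2.2 +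
            u l t.1 * u l t.2.1 * x l t.2.2) *
          (x m t.1 * u m t.2.1 * u m t.2.2 + u m t.1 * x m t.2.1 * u m t.2.2 +
            u m t.1 * u m t.2.1 * x m t.2.2) := by
        rw [Finset.sum_comm]
        exact Finset.sum_congr rfl fun l _ => Finset.sum_comm
    _ = _ := by
        simp only [Fintype.sum_prod_type, add_mul, mul_add, Finset.sum_add_distrib,
          sum_mul_mul_mul]
        simp only [← Finset.sum_add_distrib]
        exact Finset.sum_congr rfl fun l _ => Finset.sum_congr rfl fun m _ => by ring

/-- The cross term `(l, m)` of `sum_cpDeriv_sq`, with `p = ⟨uₗ, uₘ⟩`, `q = ⟨xₗ, xₘ⟩`,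
`a = ⟨uₗ, xₘ⟩`, `b = ⟨xₗ, uₘ⟩`, `n = ‖uₗ‖²`, `X = ‖xₗ‖²`. -/
lemma three_sq_mul_add_six_mul_le {s n n' X X' p q a b lam : ℝ} (hs : 0 ≤ s) (hn : 0 ≤ n)
    (hn' : 0 ≤ n') (hX : 0 ≤ X) (hX' : 0 ≤ X') (hlam : n * n' ≤ lam)
    (hp : p ^ 2 ≤ s ^ 2 * (n * n')) (hq : q ^ 2 ≤ X * X') (ha : a ^ 2 ≤ n * X')
    (hb : b ^ 2 ≤ X * n') :
    3 * p ^ 2 * q + 6 * p * a * b ≤ (3 * s ^ 2 + 6 * s) * lam * ((X + X') / 2) := by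
  have hXX' : X * X' ≤ ((X + X') / 2) ^ 2 := by nlinarith [sq_nonneg (X - X')]
  set M := (X + X') / 2
  have hM : 0 ≤ M := by positivity
  have hqM : q ≤ M := (abs_le_of_sq_le_sq' (hq.trans hXX') hM).2
  have hpab : p * a * b ≤ s * (n * n') * M := by
    refine (abs_le_of_sq_le_sq' ?_ (by positivity)).2
    calc (p * a * b) ^ 2 = p ^ 2 * a ^ 2 * b ^ 2 := by ring
      _ ≤ s ^ 2 * (n * n') * (n * X') * (X * n') := by gcongr
      _ = (s * (n * n')) ^ 2 * (X * X') := by ring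
      _ ≤ (s * (n * n')) ^ 2 * M ^ 2 := by gcongr
      _ = (s * (n * n') * M) ^ 2 := by ring
  have hnn' : s * (n * n') * M ≤ s * lam * M := by gcongr
  have hp2 : p ^ 2 * q ≤ s ^ 2 * lam * M :=
    calc p ^ 2 * q ≤ p ^ 2 * M := by gcongr
      _ ≤ s ^ 2 * (n * n') * M := by gcongr
      _ ≤ s ^ 2 * lam * M := by gcongr
  linarith

theorem sum_cpDeriv_sq_le (u x : κ → ι → ℝ) {s lam : ℝ} (hs : 0 ≤ s) (hlam0 : 0 ≤ lam)
    (hlam : ∀ l, (∑ i, u l i ^ 2) ^ 2 ≤ lam)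
    (hcor : ∀ l m, l ≠ m →
      (∑ i, u l i * u m i) ^ 2 ≤ s ^ 2 * ((∑ i, u l i ^ 2) * ∑ i, u m i ^ 2)) :
    ∑ t, cpDeriv u x t ^ 2 ≤
      6 * ∑ l, (1 / 2 * (∑ i, u l i ^ 2) ^ 2 * ∑ i, x l i ^ 2 +
          (∑ i, u l i ^ 2) * (∑ i, u l i * x l i) ^ 2) +
        (3 * s ^ 2 + 6 * s) * (Fintype.card κ * lam * ∑ l, ∑ i, x l i ^ 2) := by
  classical
  set n : κ → ℝ := fun l => ∑ i, u l i ^ 2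
  set X : κ → ℝ := fun l => ∑ i, x l i ^ 2
  set c := 3 * s ^ 2 + 6 * s
  set T : κ → κ → ℝ := fun l m => 3 * (∑ i, u l i * u m i) ^ 2 * (∑ i, x l i * x m i) +
    6 * (∑ i, u l i * u m i) * (∑ i, u l i * x m i) * ∑ i, x l i * u m i
  have hdiag : ∀ l, T l l = 6 * (1 / 2 * n l ^ 2 * X l + n l * (∑ i, u l i * x l i) ^ 2) := by
    intro l
    simp only [T, n, X, ← sq, mul_comm (x l _) (u l _)]
    ring
  have hoff : ∀ l m, l ≠ m → T l m ≤ c * lam * ((X l + X m) / 2) := fun l m hlm =>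
    three_sq_mul_add_six_mul_le hs (by positivity) (by positivity) (by positivity)
      (by positivity) (by nlinarith [hlam l, hlam m, sq_nonneg (n l - n m)]) (hcor l m hlm)
      (Finset.sum_mul_sq_le_sq_mul_sq _ _ _) (Finset.sum_mul_sq_le_sq_mul_sq _ _ _)
      (Finset.sum_mul_sq_le_sq_mul_sq _ _ _)
  have hrow : ∀ l, ∑ m, T l m ≤
      6 * (1 / 2 * n l ^ 2 * X l + n l * (∑ i, u l i * x l i) ^ 2) +
        ∑ m, c * lam * ((X l + X m) / 2) := by
    intro l
    rw [← Finset.add_sum_erase _ _ (Finset.mem_univ l), hdiag]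
    gcongr
    calc ∑ m ∈ Finset.univ.erase l, T l m
        ≤ ∑ m ∈ Finset.univ.erase l, c * lam * ((X l + X m) / 2) :=
          Finset.sum_le_sum fun m hm => hoff l m (Finset.ne_of_mem_erase hm).symm
      _ ≤ ∑ m, c * lam * ((X l + X m) / 2) :=
          Finset.sum_le_sum_of_subset_of_nonneg (Finset.subset_univ _) fun _ _ _ => by positivity
  rw [sum_cpDeriv_sq]
  refine (Finset.sum_le_sum fun l _ => hrow l).trans (le_of_eq ?_)
  simp only [Finset.sum_add_distrib, ← Finset.mul_sum, ← Finset.sum_div, Finset.sum_const,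
    Finset.card_univ, nsmul_eq_mul]
  ring

lemma sum_sq_sum_mul_mul_le (u x : κ → ι → ℝ) {s : ℝ}
    (hinf : ∀ l i, u l i ^ 2 ≤ s ^ 2 * ∑ i, u l i ^ 2) :
    ∑ a, ∑ b, (∑ l, u l a * u l b * x l a) ^ 2 ≤
      s ^ 2 * (∑ l, (∑ i, u l i ^ 2) ^ 2) * ∑ l, ∑ i, x l i ^ 2 := by
  set n : κ → ℝ := fun l => ∑ i, u l i ^ 2
  have hrow : ∀ a, ∑ l, u l a ^ 2 * n l ≤ s ^ 2 * ∑ l, n l ^ 2 := fun a => by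
    rw [Finset.mul_sum]
    exact Finset.sum_le_sum fun l _ => by nlinarith [hinf l a, (by positivity : 0 ≤ n l)]
  calc ∑ a, ∑ b, (∑ l, u l a * u l b * x l a) ^ 2
      ≤ ∑ a, ∑ b, (∑ l, (u l a * u l b) ^ 2) * ∑ l, x l a ^ 2 :=
        Finset.sum_le_sum fun a _ => Finset.sum_le_sum fun b _ =>
          Finset.sum_mul_sq_le_sq_mul_sq _ _ _
    _ = ∑ a, (∑ l, u l a ^ 2 * n l) * ∑ l, x l a ^ 2 := by
        refine Finset.sum_congr rfl fun a _ => ?_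
        rw [← Finset.sum_mul, Finset.sum_comm]
        simp only [n, Finset.mul_sum, mul_pow]
    _ ≤ ∑ a, (s ^ 2 * ∑ l, n l ^ 2) * ∑ l, x l a ^ 2 :=
        Finset.sum_le_sum fun a _ => mul_le_mul_of_nonneg_right (hrow a) (by positivity)
    _ = s ^ 2 * (∑ l, n l ^ 2) * ∑ l, ∑ i, x l i ^ 2 := by
        rw [← Finset.mul_sum, Finset.sum_comm]

lemma sum_sq_sum_sq_mul_le (u x : κ → ι → ℝ) {s : ℝ}
    (hinf : ∀ l i, u l i ^ 2 ≤ s ^ 2 * ∑ i, u l i ^ 2) :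
    ∑ a, ∑ b, (∑ l, u l a ^ 2 * x l b) ^ 2 ≤
      s ^ 2 * (∑ l, (∑ i, u l i ^ 2) ^ 2) * ∑ l, ∑ i, x l i ^ 2 := by
  have hcol : ∑ a, ∑ l, (u l a ^ 2) ^ 2 ≤ s ^ 2 * ∑ l, (∑ i, u l i ^ 2) ^ 2 := by
    rw [Finset.sum_comm, Finset.mul_sum]
    refine Finset.sum_le_sum fun l _ => ?_
    calc ∑ a, (u l a ^ 2) ^ 2 ≤ ∑ a, s ^ 2 * (∑ i, u l i ^ 2) * u l a ^ 2 :=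
          Finset.sum_le_sum fun a _ => by rw [sq (u l a ^ 2)]; gcongr; exact hinf l a
      _ = s ^ 2 * (∑ i, u l i ^ 2) ^ 2 := by rw [← Finset.mul_sum]; ring
  calc ∑ a, ∑ b, (∑ l, u l a ^ 2 * x l b) ^ 2
      ≤ ∑ a, ∑ b, (∑ l, (u l a ^ 2) ^ 2) * ∑ l, x l b ^ 2 :=
        Finset.sum_le_sum fun a _ => Finset.sum_le_sum fun b _ =>
          Finset.sum_mul_sq_le_sq_mul_sq _ _ _
    _ = (∑ a, ∑ l, (u l a ^ 2) ^ 2) * ∑ b, ∑ l, x l b ^ 2 := (Finset.sum_mul_sum _ _ _ _).symm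
    _ ≤ s ^ 2 * (∑ l, (∑ i, u l i ^ 2) ^ 2) * ∑ l, ∑ i, x l i ^ 2 := by
        rw [Finset.sum_comm (f := fun b l => x l b ^ 2)]
        gcongr

theorem sum_cpDeriv_diag_sq_le (u x : κ → ι → ℝ) {s lam : ℝ}
    (hlam : ∀ l, (∑ i, u l i ^ 2) ^ 2 ≤ lam) (hinf : ∀ l i, u l i ^ 2 ≤ s ^ 2 * ∑ i, u l i ^ 2) :
    ∑ a, ∑ b, cpDeriv u x (a, a, b) ^ 2 ≤
      10 * s ^ 2 * (Fintype.card κ * lam * ∑ l, ∑ i, x l i ^ 2) := by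
  have hsplit : ∀ a b, cpDeriv u x (a, a, b) ^ 2 ≤
      8 * (∑ l, u l a * u l b * x l a) ^ 2 + 2 * (∑ l, u l a ^ 2 * x l b) ^ 2 := by
    intro a b
    have h : cpDeriv u x (a, a, b) =
        2 * (∑ l, u l a * u l b * x l a) + ∑ l, u l a ^ 2 * x l b := by
      simp only [cpDeriv, Finset.mul_sum, ← Finset.sum_add_distrib]
      exact Finset.sum_congr rfl fun l _ => by ring
    rw [h]
    nlinarith [sq_nonneg (2 * (∑ l, u l a * u l b * x l a) - ∑ l, u l a ^ 2 * x l b)]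
  have hK : ∑ l, (∑ i, u l i ^ 2) ^ 2 ≤ Fintype.card κ * lam := by
    simpa using Finset.sum_le_card_nsmul Finset.univ _ lam fun l _ => hlam l
  calc ∑ a, ∑ b, cpDeriv u x (a, a, b) ^ 2
      ≤ 8 * ∑ a, ∑ b, (∑ l, u l a * u l b * x l a) ^ 2 +
          2 * ∑ a, ∑ b, (∑ l, u l a ^ 2 * x l b) ^ 2 := by
        simp only [Finset.mul_sum, ← Finset.sum_add_distrib]
        exact Finset.sum_le_sum fun a _ => Finset.sum_le_sum fun b _ => hsplit a b
    _ ≤ 10 * (s ^ 2 * (∑ l, (∑ i, u l i ^ 2) ^ 2) * ∑ l, ∑ i, x l i ^ 2) := by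
        linarith [sum_sq_sum_mul_mul_le u x hinf, sum_sq_sum_sq_mul_le u x hinf]
    _ ≤ 10 * (s ^ 2 * (Fintype.card κ * lam) * ∑ l, ∑ i, x l i ^ 2) := by gcongr
    _ = 10 * s ^ 2 * (Fintype.card κ * lam * ∑ l, ∑ i, x l i ^ 2) := by ring

end CPDerivative

theorem sum_sortedTriples_cpDeriv_sq_le {κ : Type*} [Fintype κ] {d : ℕ} (u x : κ → Fin d → ℝ)
    {s lam : ℝ} (hs : 0 ≤ s) (hlam0 : 0 ≤ lam) (hlam : ∀ l, (∑ i, u l i ^ 2) ^ 2 ≤ lam)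
    (hinf : ∀ l i, u l i ^ 2 ≤ s ^ 2 * ∑ i, u l i ^ 2)
    (hcor : ∀ l m, l ≠ m →
      (∑ i, u l i * u m i) ^ 2 ≤ s ^ 2 * ((∑ i, u l i ^ 2) * ∑ i, u m i ^ 2)) :
    ∑ t ∈ sortedTriples d, cpDeriv u x t ^ 2 ≤
      ∑ l, (1 / 2 * (∑ i, u l i ^ 2) ^ 2 * ∑ i, x l i ^ 2 +
          (∑ i, u l i ^ 2) * (∑ i, u l i * x l i) ^ 2) +
        21 * (s + s ^ 2) * (Fintype.card κ * lam * ∑ l, ∑ i, x l i ^ 2) := by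
  have hK : 0 ≤ (Fintype.card κ : ℝ) * lam * ∑ l, ∑ i, x l i ^ 2 := by positivity
  have hsorted := sum_sortedTriples_le (fun t => cpDeriv u x t ^ 2) (fun _ => sq_nonneg _)
    (fun t => by simp only [cpDeriv_rotate3]) (fun t => by simp only [cpDeriv_swap12])
  have hfull := sum_cpDeriv_sq_le u x hs hlam0 hlam hcor
  have hdiag := sum_cpDeriv_diag_sq_le u x hlam hinf
  nlinarith [mul_nonneg hs hK, mul_nonneg (sq_nonneg s) hK]

section Matrices

variable {d r : ℕ}

def Bmat (U : Matrix (Fin d) (Fin r) ℝ) : Matrix (Fin r × Fin d) (Fin r × Fin d) ℝ :=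
  Matrix.of fun ls ls' : Fin r × Fin d =>
    if ls.1 = ls'.1 then
      1 / 2 * norm2 (colU U ls.1) ^ 4 * (if ls.2 = ls'.2 then (1 : ℝ) else 0) +
        norm2 (colU U ls.1) ^ 2 * U ls.2 ls.1 * U ls'.2 ls.1
    else 0

def Hmat (U : Matrix (Fin d) (Fin r) ℝ) : Matrix (Fin r × Fin d) (Fin r × Fin d) ℝ :=
  Matrix.of fun a b => ∑ t ∈ sortedTriples d, hvec U t a * hvec U t b

lemma sq_norm2 {n : Type*} [Fintype n] (v : n → ℝ) : norm2 v ^ 2 = ∑ i, v i ^ 2 :=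
  Real.sq_sqrt (by positivity)

lemma Bmat_isHermitian (U : Matrix (Fin d) (Fin r) ℝ) : (Bmat U).IsHermitian := by
  refine IsHermitian.ext fun p q => ?_
  simp only [Bmat, of_apply, star_trivial, eq_comm (a := q.1), eq_comm (a := q.2)]
  split_ifs <;> simp only [*]
  ring

lemma Hmat_isHermitian (U : Matrix (Fin d) (Fin r) ℝ) : (Hmat U).IsHermitian :=
  IsHermitian.ext fun _ _ => Finset.sum_congr rfl fun _ _ => mul_comm _ _

lemma dotProduct_mulVec_of_ite_fst {κ ι : Type*} [Fintype κ] [Fintype ι] [DecidableEq κ]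
    (A : κ → Matrix ι ι ℝ) (x : κ × ι → ℝ) :
    x ⬝ᵥ (of fun p q : κ × ι => if p.1 = q.1 then A p.1 p.2 q.2 else 0) *ᵥ x =
      ∑ l, Function.curry x l ⬝ᵥ A l *ᵥ Function.curry x l := by
  simp only [dotProduct, mulVec, of_apply, Fintype.sum_prod_type, Function.curry_apply]
  refine Finset.sum_congr rfl fun l _ => Finset.sum_congr rfl fun i _ => ?_
  rw [Finset.sum_comm]
  simp only [ite_mul, zero_mul, Finset.sum_ite_eq, Finset.mem_univ, if_true]

lemma dotProduct_smul_one_add_smul_vecMulVec_mulVec {ι : Type*} [Fintype ι] [DecidableEq ι]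
    (a b : ℝ) (u x : ι → ℝ) :
    x ⬝ᵥ (a • (1 : Matrix ι ι ℝ) + b • vecMulVec u u) *ᵥ x = a * (x ⬝ᵥ x) + b * (u ⬝ᵥ x) ^ 2 := by
  rw [add_mulVec, smul_mulVec, smul_mulVec, one_mulVec, vecMulVec_mulVec, op_smul_eq_smul,
    dotProduct_add, dotProduct_smul, dotProduct_smul, dotProduct_smul, dotProduct_comm x u]
  simp only [smul_eq_mul, sq]

lemma dotProduct_mulVec_of_sum_mul {n τ : Type*} [Fintype n] (h : τ → n → ℝ) (S : Finset τ)
    (x : n → ℝ) :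
    x ⬝ᵥ (of fun a b => ∑ t ∈ S, h t a * h t b) *ᵥ x = ∑ t ∈ S, (h t ⬝ᵥ x) ^ 2 := by
  have hsum : (of fun a b => ∑ t ∈ S, h t a * h t b) = ∑ t ∈ S, vecMulVec (h t) (h t) := by
    ext a b
    simp only [of_apply, Matrix.sum_apply, vecMulVec_apply]
  rw [hsum, sum_mulVec, dotProduct_sum]
  refine Finset.sum_congr rfl fun t _ => ?_
  rw [vecMulVec_mulVec, op_smul_eq_smul, dotProduct_smul, smul_eq_mul, dotProduct_comm, sq]

lemma hvec_dotProduct (U : Matrix (Fin d) (Fin r) ℝ) (t : Idx d) (x : Fin r × Fin d → ℝ) :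
    hvec U t ⬝ᵥ x = cpDeriv (colU U) (Function.curry x) t := by
  simp only [dotProduct, Fintype.sum_prod_type, cpDeriv, hvec, colU, Function.curry_apply,
    add_mul, ite_mul, zero_mul, Finset.sum_add_distrib, Finset.sum_ite_eq, Finset.mem_univ,
    if_true]
  simp only [← Finset.sum_add_distrib]
  exact Finset.sum_congr rfl fun _ _ => by ring

lemma dotProduct_Hmat_mulVec (U : Matrix (Fin d) (Fin r) ℝ) (x : Fin r × Fin d → ℝ) :
    x ⬝ᵥ Hmat U *ᵥ x = ∑ t ∈ sortedTriples d, cpDeriv (colU U) (Function.curry x) t ^ 2 := by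
  simp only [Hmat, dotProduct_mulVec_of_sum_mul, hvec_dotProduct]

lemma dotProduct_Bmat_mulVec (U : Matrix (Fin d) (Fin r) ℝ) (x : Fin r × Fin d → ℝ) :
    x ⬝ᵥ Bmat U *ᵥ x = ∑ l, (1 / 2 * (∑ i, colU U l i ^ 2) ^ 2 * ∑ i, Function.curry x l i ^ 2 +
      (∑ i, colU U l i ^ 2) * (∑ i, colU U l i * Function.curry x l i) ^ 2) := by
  have hB : Bmat U = of fun p q => if p.1 = q.1 then
      ((1 / 2 * norm2 (colU U p.1) ^ 4) • (1 : Matrix (Fin d) (Fin d) ℝ) +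
        norm2 (colU U p.1) ^ 2 • vecMulVec (colU U p.1) (colU U p.1)) p.2 q.2 else 0 := by
    ext p q
    simp only [Bmat, of_apply, Matrix.add_apply, Matrix.smul_apply, one_apply, vecMulVec_apply,
      colU, smul_eq_mul, mul_assoc]
  rw [hB]
  refine (dotProduct_mulVec_of_ite_fst (fun l => (1 / 2 * norm2 (colU U l) ^ 4) • 1 +
    norm2 (colU U l) ^ 2 • vecMulVec (colU U l) (colU U l)) x).trans ?_
  simp only [dotProduct_smul_one_add_smul_vecMulVec_mulVec]
  simp only [show (4 : ℕ) = 2 * 2 from rfl, pow_mul, sq_norm2]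
  simp only [dotProduct, sq]

lemma dotProduct_self_eq_sum_sum (x : Fin r × Fin d → ℝ) :
    x ⬝ᵥ x = ∑ l, ∑ i, Function.curry x l i ^ 2 := by
  simp only [dotProduct, Fintype.sum_prod_type, sq, Function.curry_apply]

end Matrices

section Incoherence

variable {d r : ℕ} {μ : ℝ} {U : Matrix (Fin d) (Fin r) ℝ}

lemma Incoherent.sq_le (hU : Incoherent μ U) (l : Fin r) (i : Fin d) :
    colU U l i ^ 2 ≤ Real.sqrt (μ / d) ^ 2 * ∑ i, colU U l i ^ 2 := by
  have h : |colU U l i| ≤ Real.sqrt (μ / d) * norm2 (colU U l) :=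
    (le_ciSup (f := fun i => |colU U l i|) (Set.finite_range _).bddAbove i).trans (hU.2.1 l)
  calc colU U l i ^ 2 = |colU U l i| ^ 2 := (sq_abs _).symm
    _ ≤ (Real.sqrt (μ / d) * norm2 (colU U l)) ^ 2 := pow_le_pow_left₀ (abs_nonneg _) h 2
    _ = Real.sqrt (μ / d) ^ 2 * ∑ i, colU U l i ^ 2 := by rw [mul_pow, sq_norm2]

lemma Incoherent.sq_sum_mul_le (hU : Incoherent μ U) (l m : Fin r) (hlm : l ≠ m) :
    (∑ i, colU U l i * colU U m i) ^ 2 ≤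
      Real.sqrt (μ / d) ^ 2 * ((∑ i, colU U l i ^ 2) * ∑ i, colU U m i ^ 2) :=
  calc (∑ i, colU U l i * colU U m i) ^ 2 = |∑ i, U i l * U i m| ^ 2 := (sq_abs _).symm
    _ ≤ (Real.sqrt (μ / d) * (norm2 (colU U l) * norm2 (colU U m))) ^ 2 :=
        pow_le_pow_left₀ (abs_nonneg _) (hU.2.2 l m hlm) 2
    _ = _ := by rw [mul_pow, mul_pow, sq_norm2, sq_norm2]

lemma Incoherent.eq_zero_of_nonpos (hU : Incoherent μ U) (hμ : μ / d ≤ 0) : U = 0 := by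
  ext i l
  have h := hU.sq_le l i
  rw [Real.sqrt_eq_zero_of_nonpos hμ, zero_pow two_ne_zero, zero_mul] at h
  exact pow_eq_zero_iff two_ne_zero |>.mp (le_antisymm h (sq_nonneg _))

end Incoherence

lemma sq_sum_sq_le_iSup {d r : ℕ} (U : Matrix (Fin d) (Fin r) ℝ) (l : Fin r) :
    (∑ i, colU U l i ^ 2) ^ 2 ≤ ⨆ l, norm2 (colU U l) ^ 4 := by
  rw [← sq_norm2, ← pow_mul]
  exact le_ciSup (f := fun l => norm2 (colU U l) ^ (2 * 2)) (Set.finite_range _).bddAbove l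

/-- Loewner upper bound on `∑_{i≤j≤k} h_{ijk} h_{ijk}ᵀ` in terms of the
block-diagonal matrix `B` under incoherence. -/
theorem statement4 :
    ∃ C > (0 : ℝ),
      ∀ (d r : ℕ) (μ : ℝ) (U : Matrix (Fin d) (Fin r) ℝ), Incoherent μ U →
        Matrix.PosSemidef
          ((Matrix.of fun ls ls' : Fin r × Fin d =>
              if ls.1 = ls'.1 then
                1 / 2 * norm2 (colU U ls.1) ^ 4 * (if ls.2 = ls'.2 then (1 : ℝ) else 0) +
                  norm2 (colU U ls.1) ^ 2 * U ls.2 ls.1 * U ls'.2 ls.1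
              else 0) +
            (C * ((r : ℝ) * Real.sqrt (μ / (d : ℝ)) + μ * r / (d : ℝ)) *
                ⨆ l : Fin r, norm2 (colU U l) ^ 4) •
              (1 : Matrix (Fin r × Fin d) (Fin r × Fin d) ℝ) -
            Matrix.of fun a b => ∑ t ∈ sortedTriples d, hvec U t a * hvec U t b) := by
  refine ⟨21, by norm_num, fun d r μ U hU => ?_⟩
  rcases le_or_gt (μ / d) 0 with hμ | hμ
  · obtain rfl := hU.eq_zero_of_nonpos hμ
    simpa [norm2, colU, hvec] using PosSemidef.zero
  change (Bmat U + _ • 1 - Hmat U).PosSemidef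
  refine .of_dotProduct_mulVec_nonneg (((Bmat_isHermitian U).add
    (isHermitian_one.smul (IsSelfAdjoint.all _))).sub (Hmat_isHermitian U)) fun x => ?_
  rw [star_trivial, sub_mulVec, add_mulVec, smul_mulVec, one_mulVec, dotProduct_sub,
    dotProduct_add, dotProduct_smul, smul_eq_mul, dotProduct_Bmat_mulVec, dotProduct_Hmat_mulVec,
    dotProduct_self_eq_sum_sum]
  have key := sum_sortedTriples_cpDeriv_sq_le (colU U) (Function.curry x) (Real.sqrt_nonneg _)
    (Real.iSup_nonneg fun l => by positivity) (sq_sum_sq_le_iSup U) hU.sq_le hU.sq_sum_mul_le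
  have hμr : μ * r / d = r * Real.sqrt (μ / d) ^ 2 := by rw [Real.sq_sqrt hμ.le]; ring
  rw [Fintype.card_fin] at key
  rw [hμr]
  linarith

end TC
end
end

section
/- For every K ≥ 1 there is a constant C = C(K) > 0 with the following property. Suppose U⋆ is μ-incoherent, κ ≤ K, Ũ⋆ᵀŨ⋆ is invertible, and σ_r(Ũ⋆) ≥ λ_min^{⋆2/3}/2. Let P⋆ := Ũ⋆ (Ũ⋆ᵀŨ⋆)⁻¹ Ũ⋆ᵀ ∈ ℝ^{d²×d²}. Then for every 1 ≤ i, j ≤ d, the ((i−1)d+j)-th row of P⋆ satisfies ‖P⋆_{(i,j),:}‖₂ ≤ C·λ_min^{⋆−2/3}·‖Ũ⋆_{(i,j),:}‖₂ and ‖P⋆_{(i,j),:}‖_∞ ≤ C·(μ √r/d)·λ_min^{⋆−2/3}·‖Ũ⋆_{(i,j),:}‖₂. -/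
noncomputable section

open MeasureTheory ProbabilityTheory Matrix

namespace TC

/-!
Row `(i,j)` of `P⋆` is `Ũ⋆ y` with `y = (Ũ⋆ᵀŨ⋆)⁻¹ x` and `x = Ũ⋆_{(i,j),:}`. Since
`‖Ũ⋆ y‖₂² = yᵀ Ũ⋆ᵀŨ⋆ y = ⟨y, x⟩ ≤ ‖y‖₂ ‖x‖₂`, a lower bound `σ ≤ σ_r(Ũ⋆)` gives
`σ² ‖y‖₂² ≤ ‖y‖₂ ‖x‖₂`, hence `‖y‖₂ ≤ ‖x‖₂ / σ²` and `‖Ũ⋆ y‖₂ ≤ ‖x‖₂ / σ`; here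
`σ = λ_min^{⋆2/3} / 2`. Each entry of the row is `⟨Ũ⋆_{(k,l),:}, y⟩`, and incoherence together
with `κ ≤ K` bounds every entry of `Ũ⋆` by `(μ/d) ‖u_a⋆‖₂² ≤ (μ/d) K λ_min^{⋆2/3}`, so
`‖Ũ⋆_{(k,l),:}‖₂ ≤ √r (μ/d) K λ_min^{⋆2/3}`.
-/

section Norm2

variable {n : Type*} [Fintype n]

theorem norm2_nonneg (u : n → ℝ) : 0 ≤ norm2 u := Real.sqrt_nonneg _

theorem norm2_sq (u : n → ℝ) : norm2 u ^ 2 = ∑ i, u i ^ 2 :=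
  Real.sq_sqrt (Finset.sum_nonneg fun i _ => sq_nonneg (u i))

theorem abs_dotProduct_le_norm2_mul_norm2 (u v : n → ℝ) : |u ⬝ᵥ v| ≤ norm2 u * norm2 v := by
  rw [← Real.sqrt_sq_eq_abs, norm2, norm2,
    ← Real.sqrt_mul (Finset.sum_nonneg fun i _ => sq_nonneg (u i))]
  exact Real.sqrt_le_sqrt (Finset.sum_mul_sq_le_sq_mul_sq _ u v)

theorem norm2_le_sqrt_card_mul {u : n → ℝ} {B : ℝ} (h : ∀ i, |u i| ≤ B) :
    norm2 u ≤ Real.sqrt (Fintype.card n) * B := by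
  rcases isEmpty_or_nonempty n with _ | ⟨⟨i⟩⟩
  · simp [norm2]
  have hB : 0 ≤ B := (abs_nonneg _).trans (h i)
  calc norm2 u ≤ Real.sqrt (∑ _i : n, B ^ 2) :=
        Real.sqrt_le_sqrt <| Finset.sum_le_sum fun i _ =>
          sq_le_sq' (neg_le_of_abs_le (h i)) (le_of_abs_le (h i))
    _ = Real.sqrt (Fintype.card n) * B := by
      rw [Finset.sum_const, Finset.card_univ, nsmul_eq_mul, Real.sqrt_mul (Nat.cast_nonneg _),
        Real.sqrt_sq hB]

end Norm2

section Projection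

variable {m n : Type*} [Fintype m] [Fintype n] {A : Matrix m n ℝ}

theorem norm2_mulVec_sq (A : Matrix m n ℝ) (y : n → ℝ) :
    norm2 (A *ᵥ y) ^ 2 = y ⬝ᵥ (Aᵀ * A) *ᵥ y := by
  rw [norm2_sq, ← mulVec_mulVec, mulVec_transpose, dotProduct_comm, ← dotProduct_mulVec]
  simp only [dotProduct, sq]

variable [DecidableEq n]

theorem row_mul_gram_inv_mul_transpose (A : Matrix m n ℝ) (p : m) :
    (A * (Aᵀ * A)⁻¹ * Aᵀ) p = A *ᵥ (Aᵀ * A)⁻¹ *ᵥ A p := by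
  have hsymm : (A * (Aᵀ * A)⁻¹ * Aᵀ).IsSymm := by
    rw [IsSymm, transpose_mul, transpose_mul, transpose_transpose, transpose_nonsing_inv,
      transpose_mul, transpose_transpose, Matrix.mul_assoc]
  ext q
  rw [hsymm.apply q p, Matrix.mul_assoc]
  rfl

theorem norm2_mulVec_gram_inv_mulVec_sq_le (hdet : IsUnit (Aᵀ * A).det) (x : n → ℝ) :
    norm2 (A *ᵥ (Aᵀ * A)⁻¹ *ᵥ x) ^ 2 ≤ norm2 ((Aᵀ * A)⁻¹ *ᵥ x) * norm2 x := by
  rw [norm2_mulVec_sq, mulVec_mulVec, mul_nonsing_inv _ hdet, one_mulVec]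
  exact (le_abs_self _).trans (abs_dotProduct_le_norm2_mul_norm2 _ _)

variable {σ : ℝ}

theorem norm2_gram_inv_mulVec_le (hσ : 0 < σ)
    (hA : ∀ y : n → ℝ, σ ^ 2 * ∑ l, y l ^ 2 ≤ ∑ i, (A *ᵥ y) i ^ 2)
    (hdet : IsUnit (Aᵀ * A).det) (x : n → ℝ) :
    norm2 ((Aᵀ * A)⁻¹ *ᵥ x) ≤ norm2 x / σ ^ 2 := by
  set y := (Aᵀ * A)⁻¹ *ᵥ x
  have hy : σ ^ 2 * norm2 y ^ 2 ≤ norm2 y * norm2 x := by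
    rw [norm2_sq]
    exact (hA y).trans ((norm2_sq _).symm.le.trans (norm2_mulVec_gram_inv_mulVec_sq_le hdet x))
  rw [le_div_iff₀ (by positivity)]
  rcases (norm2_nonneg y).eq_or_lt with h0 | hpos
  · rw [← h0, zero_mul]
    exact norm2_nonneg x
  · refine le_of_mul_le_mul_left ?_ hpos
    linarith [show norm2 y * (norm2 y * σ ^ 2) = σ ^ 2 * norm2 y ^ 2 by ring]

theorem norm2_mulVec_gram_inv_mulVec_le (hσ : 0 < σ)
    (hA : ∀ y : n → ℝ, σ ^ 2 * ∑ l, y l ^ 2 ≤ ∑ i, (A *ᵥ y) i ^ 2)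
    (hdet : IsUnit (Aᵀ * A).det) (x : n → ℝ) :
    norm2 (A *ᵥ (Aᵀ * A)⁻¹ *ᵥ x) ≤ norm2 x / σ := by
  refine (pow_le_pow_iff_left₀ (norm2_nonneg _) (by positivity [norm2_nonneg x]) two_ne_zero).mp ?_
  calc norm2 (A *ᵥ (Aᵀ * A)⁻¹ *ᵥ x) ^ 2 ≤ norm2 ((Aᵀ * A)⁻¹ *ᵥ x) * norm2 x :=
        norm2_mulVec_gram_inv_mulVec_sq_le hdet x
    _ ≤ norm2 x / σ ^ 2 * norm2 x :=
        mul_le_mul_of_nonneg_right (norm2_gram_inv_mulVec_le hσ hA hdet x) (norm2_nonneg x)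
    _ = (norm2 x / σ) ^ 2 := by ring

end Projection

section Incoherence

variable {d r : ℕ} {μ : ℝ} {U : Matrix (Fin d) (Fin r) ℝ}

theorem Incoherent.abs_le (h : Incoherent μ U) (k : Fin d) (a : Fin r) :
    |U k a| ≤ Real.sqrt (μ / d) * norm2 (colU U a) :=
  (le_ciSup (Finite.bddAbove_range fun k => |colU U a k|) k).trans (h.2.1 a)

theorem Incoherent.div_pos (h : Incoherent μ U) (hmin : 0 < lamMin U) : 0 < μ / d := by
  obtain ⟨a⟩ : Nonempty (Fin r) := by
    by_contra hr
    rw [not_nonempty_iff] at hr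
    exact hmin.ne' (Real.iInf_of_isEmpty _)
  by_contra hμ
  have hcol : ∀ k, U k a = 0 := fun k => abs_nonpos_iff.mp <| by
    simpa [Real.sqrt_eq_zero_of_nonpos (not_lt.mp hμ)] using h.abs_le k a
  have hle : lamMin U ≤ norm2 (colU U a) ^ 3 := ciInf_le (Finite.bddBelow_range _) a
  simp [colU, hcol, norm2] at hle
  linarith

theorem Incoherent.abs_lift_le (h : Incoherent μ U) (hμ : 0 ≤ μ / d) (kl : Fin d × Fin d)
    (a : Fin r) : |lift U kl a| ≤ μ / d * norm2 (colU U a) ^ 2 := by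
  calc |lift U kl a| = |U kl.1 a| * |U kl.2 a| := abs_mul _ _
    _ ≤ (Real.sqrt (μ / d) * norm2 (colU U a)) * (Real.sqrt (μ / d) * norm2 (colU U a)) :=
        mul_le_mul (h.abs_le _ a) (h.abs_le _ a) (abs_nonneg _)
          (mul_nonneg (Real.sqrt_nonneg _) (norm2_nonneg _))
    _ = μ / d * norm2 (colU U a) ^ 2 := by
        rw [mul_mul_mul_comm, Real.mul_self_sqrt hμ, sq]

theorem norm2_colU_sq_le {K : ℝ} (hK : 1 ≤ K) (hmax : lamMax U ≤ K * lamMin U) (a : Fin r) :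
    norm2 (colU U a) ^ 2 ≤ K * lamMin U ^ ((2 : ℝ) / 3) := by
  have hmin : 0 ≤ lamMin U := Real.iInf_nonneg fun l => pow_nonneg (norm2_nonneg _) 3
  have h3 : norm2 (colU U a) ^ 3 ≤ K * lamMin U :=
    (le_ciSup (Finite.bddAbove_range fun l => norm2 (colU U l) ^ 3) a).trans hmax
  calc norm2 (colU U a) ^ 2 = (norm2 (colU U a) ^ 3) ^ ((2 : ℝ) / 3) := by
        rw [← Real.rpow_natCast _ 3, ← Real.rpow_mul (norm2_nonneg _)]
        norm_num
    _ ≤ (K * lamMin U) ^ ((2 : ℝ) / 3) :=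
        Real.rpow_le_rpow (pow_nonneg (norm2_nonneg _) 3) h3 (by norm_num)
    _ = K ^ ((2 : ℝ) / 3) * lamMin U ^ ((2 : ℝ) / 3) := Real.mul_rpow (by linarith) hmin
    _ ≤ K * lamMin U ^ ((2 : ℝ) / 3) := by
        gcongr
        simpa using Real.rpow_le_rpow_of_exponent_le hK (show (2 : ℝ) / 3 ≤ 1 by norm_num)

end Incoherence

/-- row norms of the projection-type matrix `P⋆ = Ũ (ŨᵀŨ)⁻¹ Ũᵀ`. -/
theorem statement15 :
    ∀ K : ℝ, 1 ≤ K → ∃ C > (0 : ℝ),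
      ∀ (d r : ℕ) (μ : ℝ) (U : Matrix (Fin d) (Fin r) ℝ),
        Incoherent μ U → 0 < lamMin U → lamMax U ≤ K * lamMin U →
        IsUnit (gram U).det →
        (∀ x : Fin r → ℝ,
          (lamMin U ^ ((2 : ℝ) / 3) / 2) ^ 2 * ∑ l, x l ^ 2 ≤
            ∑ ij : Fin d × Fin d, (lift U).mulVec x ij ^ 2) →
        ∀ i j : Fin d,
          norm2 (fun kl : Fin d × Fin d => Pmat U (i, j) kl) ≤
            C * (lamMin U ^ ((2 : ℝ) / 3))⁻¹ * norm2 (fun l => lift U (i, j) l) ∧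
          (⨆ kl : Fin d × Fin d, |Pmat U (i, j) kl|) ≤
            C * (μ * Real.sqrt r / d) * (lamMin U ^ ((2 : ℝ) / 3))⁻¹ *
              norm2 (fun l => lift U (i, j) l) := by
  intro K hK
  refine ⟨4 * K, by positivity, fun d r μ U hInc hmin hmax hdet hσ i j => ?_⟩
  set s := lamMin U ^ ((2 : ℝ) / 3)
  have hs : 0 < s := Real.rpow_pos_of_pos hmin _
  have hμ : 0 ≤ μ / d := (hInc.div_pos hmin).le
  have hrow : Pmat U (i, j) = lift U *ᵥ (gram U)⁻¹ *ᵥ lift U (i, j) :=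
    row_mul_gram_inv_mul_transpose (lift U) (i, j)
  have hrows : ∀ kl, norm2 (lift U kl) ≤ Real.sqrt r * (μ / d * (K * s)) := fun kl => by
    simpa using norm2_le_sqrt_card_mul fun a => (hInc.abs_lift_le hμ kl a).trans
      (mul_le_mul_of_nonneg_left (norm2_colU_sq_le hK hmax a) hμ)
  constructor
  · calc norm2 (Pmat U (i, j)) ≤ norm2 (lift U (i, j)) / (s / 2) := by
          rw [hrow]; exact norm2_mulVec_gram_inv_mulVec_le (half_pos hs) hσ hdet _
      _ = 2 * s⁻¹ * norm2 (lift U (i, j)) := by field_simp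
      _ ≤ 4 * K * s⁻¹ * norm2 (lift U (i, j)) :=
          mul_le_mul_of_nonneg_right
            (mul_le_mul_of_nonneg_right (by linarith) (inv_nonneg.mpr hs.le)) (norm2_nonneg _)
  · have : Nonempty (Fin d × Fin d) := ⟨(i, j)⟩
    refine ciSup_le fun kl => ?_
    calc |Pmat U (i, j) kl| = |lift U kl ⬝ᵥ (gram U)⁻¹ *ᵥ lift U (i, j)| := by rw [hrow]; rfl
      _ ≤ norm2 (lift U kl) * norm2 ((gram U)⁻¹ *ᵥ lift U (i, j)) :=
          abs_dotProduct_le_norm2_mul_norm2 _ _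
      _ ≤ Real.sqrt r * (μ / d * (K * s)) * (norm2 (lift U (i, j)) / (s / 2) ^ 2) :=
          mul_le_mul (hrows kl) (norm2_gram_inv_mulVec_le (half_pos hs) hσ hdet _)
            (norm2_nonneg _) (by positivity)
      _ = 4 * K * (μ * Real.sqrt r / d) * s⁻¹ * norm2 (lift U (i, j)) := by
          field_simp
          ring

end TC
end
end

section
/- Let U = [u₁,…,u_r] and V = [v₁,…,v_r] be d×r real matrices, and let Ũ, Ṽ ∈ ℝ^{d²×r} be the lifted matrices whose l-th columns are u_l ⊗ u_l and v_l ⊗ v_l respectively (entries Ũ_{(i−1)d+j, l} = u_{l,i} u_{l,j}). Then: (a) ‖Ũ − Ṽ‖_F² ≤ 2·max_{1≤s≤r}(‖u_s‖₂² + ‖v_s‖₂²)·‖U − V‖_F²; and (b) for every 1 ≤ i, j ≤ d, Σ_{s=1}^r (u_{s,i} u_{s,j} − v_{s,i} v_{s,j})² ≤ 2·(max_{1≤s≤r}‖u_s‖_∞² + max_{1≤s≤r}‖v_s‖_∞²)·‖U − V‖_{2,∞}²; in particular ‖Ũ − Ṽ‖_{2,∞}² ≤ 2·(max_s‖u_s‖_∞²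 + max_s‖v_s‖_∞²)·‖U − V‖_{2,∞}². -/
noncomputable section

open MeasureTheory ProbabilityTheory Matrix

namespace TC

/-! Writing `u_i u_j - v_i v_j = u_j (u_i - v_i) + v_i (u_j - v_j)` and using
`(x + y)² ≤ 2 (x² + y²)` bounds each squared entry of `Ũ - Ṽ` by the squared entries of `U - V`
in row `i` and row `j`, weighted by squared entries of `U` and `V`. Summing over all `(i, j)` for a
fixed column gives (a); summing over the columns for a fixed `(i, j)` and bounding the weights by
the largest sup-norm gives (b), and (c) is (b) maximised over `(i, j)`. -/

section

variable {R : Type*} [CommRing R] [LinearOrder R] [IsStrictOrderedRing R]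

theorem sq_mul_sub_mul_le (a b c e : R) :
    (a * b - c * e) ^ 2 ≤ 2 * (b ^ 2 * (a - c) ^ 2 + c ^ 2 * (b - e) ^ 2) := by
  have hsplit : a * b - c * e = b * (a - c) + c * (b - e) := by ring
  rw [hsplit, ← mul_pow, ← mul_pow]
  exact add_sq_le

theorem sum_sum_sq_mul_self_sub_le {n : Type*} [Fintype n] (u v : n → R) :
    ∑ i, ∑ j, (u i * u j - v i * v j) ^ 2 ≤
      2 * (∑ i, u i ^ 2 + ∑ i, v i ^ 2) * ∑ i, (u i - v i) ^ 2 := by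
  calc ∑ i, ∑ j, (u i * u j - v i * v j) ^ 2
      ≤ ∑ i, ∑ j, 2 * (u j ^ 2 * (u i - v i) ^ 2 + v i ^ 2 * (u j - v j) ^ 2) :=
        Finset.sum_le_sum fun i _ => Finset.sum_le_sum fun j _ => sq_mul_sub_mul_le _ _ _ _
    _ = 2 * (∑ i, u i ^ 2 + ∑ i, v i ^ 2) * ∑ i, (u i - v i) ^ 2 := by
        simp only [← Finset.mul_sum, Finset.sum_add_distrib]
        rw [Finset.sum_comm, ← Finset.sum_mul_sum, ← Finset.sum_mul]
        ring

theorem sum_sq_mul_sub_mul_le_of_le {m n : Type*} [Fintype n] (U V : Matrix m n R)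
    {A B Δ : R} (hA : 0 ≤ A) (hB : 0 ≤ B) (hU : ∀ i s, U i s ^ 2 ≤ A) (hV : ∀ i s, V i s ^ 2 ≤ B)
    (hΔ : ∀ i, ∑ s, (U i s - V i s) ^ 2 ≤ Δ) (i j : m) :
    ∑ s, (U i s * U j s - V i s * V j s) ^ 2 ≤ 2 * (A + B) * Δ := by
  calc ∑ s, (U i s * U j s - V i s * V j s) ^ 2
      ≤ ∑ s, 2 * (A * (U i s - V i s) ^ 2 + B * (U j s - V j s) ^ 2) := by
        refine Finset.sum_le_sum fun s _ => (sq_mul_sub_mul_le _ _ _ _).trans ?_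
        gcongr
        exacts [hU j s, hV i s]
    _ = 2 * (A * ∑ s, (U i s - V i s) ^ 2 + B * ∑ s, (U j s - V j s) ^ 2) := by
        simp only [← Finset.mul_sum, Finset.sum_add_distrib]
    _ ≤ 2 * (A * Δ + B * Δ) := by gcongr <;> exact hΔ _
    _ = 2 * (A + B) * Δ := by ring

end

theorem le_iSup_of_finite {ι α : Type*} [Finite ι] [ConditionallyCompleteLattice α] [Nonempty α]
    (f : ι → α) (i : ι) : f i ≤ ⨆ i, f i :=
  le_ciSup (Finite.bddAbove_range f) i

theorem sq_le_iSup_normInf_sq {d r : ℕ} (U : Matrix (Fin d) (Fin r) ℝ) (i : Fin d) (s : Fin r) :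
    U i s ^ 2 ≤ ⨆ s, normInf (colU U s) ^ 2 := by
  have habs : |U i s| ≤ normInf (colU U s) := le_iSup_of_finite (fun i => |U i s|) i
  calc U i s ^ 2 = |U i s| ^ 2 := (sq_abs _).symm
    _ ≤ normInf (colU U s) ^ 2 := by gcongr
    _ ≤ _ := le_iSup_of_finite (fun s => normInf (colU U s) ^ 2) s

/-- Frobenius and `2,∞` bounds for the difference of lifted matrices. -/
theorem statement18 {d r : ℕ} (U V : Matrix (Fin d) (Fin r) ℝ) :
    ((∑ ij : Fin d × Fin d, ∑ s : Fin r, (lift U ij s - lift V ij s) ^ 2) ≤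
        2 * (⨆ s : Fin r, ((∑ i, U i s ^ 2) + ∑ i, V i s ^ 2)) *
          ∑ i, ∑ s, (U i s - V i s) ^ 2) ∧
    (∀ i j : Fin d,
      (∑ s : Fin r, (U i s * U j s - V i s * V j s) ^ 2) ≤
        2 * ((⨆ s : Fin r, normInf (colU U s) ^ 2) +
              ⨆ s : Fin r, normInf (colU V s) ^ 2) *
          ⨆ i' : Fin d, ∑ s, (U i' s - V i' s) ^ 2) ∧
    (⨆ ij : Fin d × Fin d, ∑ s : Fin r, (lift U ij s - lift V ij s) ^ 2) ≤
      2 * ((⨆ s : Fin r, normInf (colU U s) ^ 2) +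
            ⨆ s : Fin r, normInf (colU V s) ^ 2) *
        ⨆ i' : Fin d, ∑ s, (U i' s - V i' s) ^ 2 := by
  have hA : 0 ≤ ⨆ s, normInf (colU U s) ^ 2 := Real.iSup_nonneg fun _ => sq_nonneg _
  have hB : 0 ≤ ⨆ s, normInf (colU V s) ^ 2 := Real.iSup_nonneg fun _ => sq_nonneg _
  have hΔ : 0 ≤ ⨆ i', ∑ s, (U i' s - V i' s) ^ 2 :=
    Real.iSup_nonneg fun _ => Finset.sum_nonneg fun _ _ => sq_nonneg _
  have hrows := sum_sq_mul_sub_mul_le_of_le U V hA hB (sq_le_iSup_normInf_sq U)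
    (sq_le_iSup_normInf_sq V) (le_iSup_of_finite fun i' => ∑ s, (U i' s - V i' s) ^ 2)
  refine ⟨?_, hrows, ?_⟩
  · calc ∑ ij : Fin d × Fin d, ∑ s, (lift U ij s - lift V ij s) ^ 2
        = ∑ s, ∑ i, ∑ j, (U i s * U j s - V i s * V j s) ^ 2 := by
          rw [Finset.sum_comm]
          exact Finset.sum_congr rfl fun s _ => Fintype.sum_prod_type _
      _ ≤ ∑ s, 2 * (⨆ s, ((∑ i, U i s ^ 2) + ∑ i, V i s ^ 2)) * ∑ i, (U i s - V i s) ^ 2 := by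
          refine Finset.sum_le_sum fun s _ =>
            (sum_sum_sq_mul_self_sub_le (fun i => U i s) (fun i => V i s)).trans ?_
          gcongr
          exact le_iSup_of_finite (fun s => (∑ i, U i s ^ 2) + ∑ i, V i s ^ 2) s
      _ = _ := by rw [← Finset.mul_sum, Finset.sum_comm]
  · exact Real.iSup_le (fun ij => hrows ij.1 ij.2) (by positivity)

end TC
end
end
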